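/- arXiv:1803.07617 — 3 statements merged into one kernel-verified Lean document; each statement's English description precedes it below -/
import Mathlib

section
/- For symmetric real matrices A and B with A ⪯ B (i.e., B − A positive semidefinite), tr(exp(A)) ≤ tr(exp(B)). -/
/-! Let `(vᵢ)` be an orthonormal eigenbasis of `A`. Then
`tr exp A = ∑ exp ⟨vᵢ, A vᵢ⟩ ≤ ∑ exp ⟨vᵢ, B vᵢ⟩`, and for a unit vector `v`, Jensen's inequality
for the probability weights `⟨wⱼ, v⟩²` (with `(wⱼ)` an eigenbasis of `B`) gives
`exp ⟨v, B v⟩ ≤ ⟨v, exp B v⟩`. Summing the latter over the basis `(vᵢ)` yields `tr exp B`. -/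

open Matrix

namespace Matrix

variable {n : Type*} [Fintype n] [DecidableEq n]

lemma trace_eq_sum_star_dotProduct_mulVec {𝕜 : Type*} [RCLike 𝕜] (M : Matrix n n 𝕜)
    (b : OrthonormalBasis n 𝕜 (EuclideanSpace 𝕜 n)) :
    M.trace = ∑ i, star ⇑(b i) ⬝ᵥ M *ᵥ ⇑(b i) := by
  rw [← trace_toLin_eq M (PiLp.basisFun 2 𝕜 n), ← toLpLin_eq_toLin,
    LinearMap.trace_eq_sum_inner _ b]
  simp [EuclideanSpace.inner_eq_star_dotProduct, toLpLin_apply, dotProduct_comm]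

namespace IsHermitian

section RCLike

variable {𝕜 : Type*} [RCLike 𝕜] {A : Matrix n n 𝕜}

lemma exp_eq_cfc (hA : A.IsHermitian) : NormedSpace.exp A = cfc Real.exp A := by
  set U : Matrix n n 𝕜 := (hA.eigenvectorUnitary : Matrix n n 𝕜)
  have hU : star U = U⁻¹ := (inv_eq_left_inv (Unitary.coe_star_mul_self _)).symm
  conv_lhs => rw [hA.spectral_theorem]
  rw [hA.cfc_eq, IsHermitian.cfc, Unitary.conjStarAlgAut_apply, Unitary.conjStarAlgAut_apply, hU,
    exp_conj _ _ Unitary.isUnit_coe, exp_diagonal]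
  congr 3
  funext i
  simp only [Pi.exp_def, Function.comp_apply, Real.exp_eq_exp_ℝ]
  exact (NormedSpace.algebraMap_exp_comm (𝔸 := 𝕜) (hA.eigenvalues i)).symm

lemma trace_cfc (hA : A.IsHermitian) (f : ℝ → ℝ) :
    (cfc f A).trace = ∑ i, (f (hA.eigenvalues i) : 𝕜) := by
  rw [hA.cfc_eq, IsHermitian.cfc, Unitary.conjStarAlgAut_apply, trace_mul_cycle,
    Unitary.coe_star_mul_self, one_mul, trace_diagonal]
  rfl

end RCLike

section Real

variable {A : Matrix n n ℝ}

lemma dotProduct_mulVec_cfc (hA : A.IsHermitian) (f : ℝ → ℝ) (x : n → ℝ) :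
    x ⬝ᵥ cfc f A *ᵥ x = ∑ i, f (hA.eigenvalues i) * (⇑(hA.eigenvectorBasis i) ⬝ᵥ x) ^ 2 := by
  rw [hA.cfc_eq, IsHermitian.cfc, Unitary.conjStarAlgAut_apply, ← mulVec_mulVec, ← mulVec_mulVec,
    dotProduct_mulVec, ← mulVec_transpose, ← conjTranspose_eq_transpose_of_trivial,
    ← star_eq_conjTranspose]
  have hcoord : star (hA.eigenvectorUnitary : Matrix n n ℝ) *ᵥ x =
      fun i ↦ ⇑(hA.eigenvectorBasis i) ⬝ᵥ x := by
    ext i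
    simp only [mulVec, dotProduct, star_apply, eigenvectorUnitary_apply, star_trivial]
  rw [hcoord]
  simp only [dotProduct, RCLike.ofReal_real_eq_id, CompTriple.comp_eq, mulVec_diagonal,
    Function.comp_apply]
  exact Fintype.sum_congr _ _ fun i ↦ by ring

lemma map_dotProduct_mulVec_le (hA : A.IsHermitian) {f : ℝ → ℝ} (hf : ConvexOn ℝ Set.univ f)
    {x : n → ℝ} (hx : x ⬝ᵥ x = 1) : f (x ⬝ᵥ A *ᵥ x) ≤ x ⬝ᵥ cfc f A *ᵥ x := by
  have hweights : ∑ i, (⇑(hA.eigenvectorBasis i) ⬝ᵥ x) ^ 2 = 1 := by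
    simpa [cfc_const_one ℝ A, hx] using (hA.dotProduct_mulVec_cfc (fun _ ↦ 1) x).symm
  conv_lhs => rw [← cfc_id' ℝ A]
  rw [hA.dotProduct_mulVec_cfc, hA.dotProduct_mulVec_cfc]
  simpa [smul_eq_mul, mul_comm] using
    hf.map_sum_le (fun i _ ↦ sq_nonneg _) hweights (fun i _ ↦ Set.mem_univ (hA.eigenvalues i))

end Real

end IsHermitian

end Matrix

/-- Monotonicity of the trace exponential in the Loewner order:
if `A ⪯ B` (i.e. `B - A` is positive semidefinite) then `tr exp A ≤ tr exp B`. -/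
theorem trace_exp_le_trace_exp_of_loewner {d : ℕ} (A B : Matrix (Fin d) (Fin d) ℝ)
    (hA : A.IsHermitian) (hB : B.IsHermitian) (hAB : (B - A).PosSemidef) :
    (NormedSpace.exp A).trace ≤ (NormedSpace.exp B).trace := by
  rw [hA.exp_eq_cfc, hA.trace_cfc, hB.exp_eq_cfc,
    trace_eq_sum_star_dotProduct_mulVec _ hA.eigenvectorBasis]
  gcongr with i
  set v : Fin d → ℝ := ⇑(hA.eigenvectorBasis i)
  have hunit : v ⬝ᵥ v = 1 := by
    have h := real_inner_self_eq_norm_sq (hA.eigenvectorBasis i)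
    rw [hA.eigenvectorBasis.orthonormal.1 i, EuclideanSpace.inner_eq_star_dotProduct] at h
    simpa using h
  have heig : hA.eigenvalues i = v ⬝ᵥ A *ᵥ v := by simpa using hA.eigenvalues_eq i
  have hloewner : v ⬝ᵥ A *ᵥ v ≤ v ⬝ᵥ B *ᵥ v := by
    have h := hAB.dotProduct_mulVec_nonneg v
    simp only [star_trivial, sub_mulVec, dotProduct_sub] at h
    linarith
  calc Real.exp (hA.eigenvalues i) ≤ Real.exp (v ⬝ᵥ B *ᵥ v) := by rw [heig]; gcongr
    _ ≤ v ⬝ᵥ cfc Real.exp B *ᵥ v := hB.map_dotProduct_mulVec_le convexOn_exp hunit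
    _ = star v ⬝ᵥ cfc Real.exp B *ᵥ v := by rw [star_trivial]
end

section
/- If f: E → ℝ is convex, differentiable, and β-smooth with respect to a norm ‖·‖, then for all x, y: (1/(2β))·‖∇f(x) − ∇f(y)‖_*² ≤ f(x) − f(y) − ⟨∇f(y), x − y⟩. -/
/-!
Convexity gives the first-order lower bound `f y + ∇f(y)(z - y) ≤ f z`; taking `z = x - v`
and bounding `f (x - v)` from above by smoothness shows that `g = ∇f(x) - ∇f(y)` satisfies
`g v ≤ D + (β/2)‖v‖²` for every `v`, where `D = f x - f y - ∇f(y)(x - y)`. Applied to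
`v = t • w` this is a quadratic inequality in `t`, whose discriminant yields
`(g w)² ≤ 2βD‖w‖²`, hence `‖g‖² ≤ 2βD`.
-/

theorem ConvexOn.add_le_of_hasFDerivAt {E : Type*} [NormedAddCommGroup E] [NormedSpace ℝ E]
    {s : Set E} {f : E → ℝ} {f' : E →L[ℝ] ℝ} {x y : E} (hf : ConvexOn ℝ s f)
    (hx : x ∈ s) (hy : y ∈ s) (hf' : HasFDerivAt f f' y) :
    f y + f' (x - y) ≤ f x := by
  set φ : ℝ → ℝ := f ∘ AffineMap.lineMap (k := ℝ) y x with hφ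
  have hline : ConvexOn ℝ (AffineMap.lineMap y x ⁻¹' s) φ := hf.comp_affineMap _
  have hderiv : HasDerivAt φ (f' (x - y)) 0 :=
    hf'.comp_hasDerivAt_of_eq (0 : ℝ) AffineMap.hasDerivAt_lineMap (by simp)
  have hslope :=
    hline.le_slope_of_hasDerivAt (by simpa using hy) (by simpa using hx) one_pos hderiv
  simp only [hφ, slope_def_field, Function.comp_apply, AffineMap.lineMap_apply_zero,
    AffineMap.lineMap_apply_one, sub_zero, div_one] at hslope
  linarith

theorem ContinuousLinearMap.sq_norm_le_of_apply_le_add_sq {E : Type*}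
    [SeminormedAddCommGroup E] [NormedSpace ℝ E] (g : E →L[ℝ] ℝ) {β D : ℝ} (hβ : 0 ≤ β)
    (hg : ∀ v, g v ≤ D + β / 2 * ‖v‖ ^ 2) :
    ‖g‖ ^ 2 ≤ 2 * β * D := by
  have hD : 0 ≤ D := by simpa using hg 0
  have hpoint : ∀ w, (g w) ^ 2 ≤ 2 * β * D * ‖w‖ ^ 2 := by
    intro w
    have hquad : ∀ t : ℝ, 0 ≤ β / 2 * ‖w‖ ^ 2 * (t * t) + (-g w) * t + D := by
      intro t
      have hgt := hg (t • w)
      rw [map_smul, smul_eq_mul, norm_smul, Real.norm_eq_abs, mul_pow, sq_abs] at hgt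
      linarith
    have hdiscrim := discrim_le_zero hquad
    rw [discrim] at hdiscrim
    linarith
  have hnorm : ‖g‖ ≤ √(2 * β * D) := by
    refine g.opNorm_le_bound (Real.sqrt_nonneg _) fun w => ?_
    rw [Real.norm_eq_abs, ← Real.sqrt_sq (norm_nonneg w), ← Real.sqrt_mul (by positivity)]
    exact Real.abs_le_sqrt (hpoint w)
  calc ‖g‖ ^ 2 ≤ √(2 * β * D) ^ 2 := pow_le_pow_left₀ (norm_nonneg g) hnorm 2
    _ = 2 * β * D := Real.sq_sqrt (by positivity)

theorem smooth_convex_gradient_lower_bound_general {E : Type*} [NormedAddCommGroup E]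
    [NormedSpace ℝ E]
    (f : E → ℝ) (hconv : ConvexOn ℝ Set.univ f) (hdiff : Differentiable ℝ f) (β : ℝ)
    (hsmooth : ∀ x h : E, f (x + h) ≤ f x + fderiv ℝ f x h + β / 2 * ‖h‖ ^ 2)
    (x y : E) :
    1 / (2 * β) * ‖fderiv ℝ f x - fderiv ℝ f y‖ ^ 2 ≤
      f x - f y - fderiv ℝ f y (x - y) := by
  have hgrad : ∀ z, f y + fderiv ℝ f y (z - y) ≤ f z := fun z =>
    hconv.add_le_of_hasFDerivAt (Set.mem_univ z) (Set.mem_univ y) (hdiff y).hasFDerivAt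
  rcases le_or_gt β 0 with hβ | hβ
  · have hcoeff : 1 / (2 * β) ≤ 0 := one_div_nonpos.mpr (by linarith)
    exact (mul_nonpos_of_nonpos_of_nonneg hcoeff (sq_nonneg _)).trans (by linarith [hgrad x])
  · have hdual : ∀ v, (fderiv ℝ f x - fderiv ℝ f y) v ≤
        f x - f y - fderiv ℝ f y (x - y) + β / 2 * ‖v‖ ^ 2 := by
      intro v
      have hlower := hgrad (x - v)
      have hupper := hsmooth x (-v)
      rw [sub_right_comm, map_sub] at hlower
      rw [← sub_eq_add_neg, map_neg, norm_neg] at hupper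
      simp only [sub_apply]
      linarith
    rw [one_div, inv_mul_le_iff₀ (by positivity)]
    exact (fderiv ℝ f x - fderiv ℝ f y).sq_norm_le_of_apply_le_add_sq hβ.le hdual

/-- For a convex, differentiable, `β`-smooth function `f`:
`(1/(2β))·‖∇f(x) − ∇f(y)‖_*² ≤ f(x) − f(y) − ⟨∇f(y), x − y⟩`. -/
theorem smooth_convex_gradient_lower_bound {E : Type*} [NormedAddCommGroup E]
    [NormedSpace ℝ E] [FiniteDimensional ℝ E]
    (f : E → ℝ) (hconv : ConvexOn ℝ Set.univ f) (hdiff : Differentiable ℝ f) (β : ℝ)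
    (hsmooth : ∀ x h : E, f (x + h) ≤ f x + fderiv ℝ f x h + β / 2 * ‖h‖ ^ 2)
    (x y : E) :
    1 / (2 * β) * ‖fderiv ℝ f x - fderiv ℝ f y‖ ^ 2 ≤
      f x - f y - fderiv ℝ f y (x - y) :=
  smooth_convex_gradient_lower_bound_general f hconv hdiff β hsmooth x y
end

section
/- Let ε₁,…,ε_n be independent Rademacher variables and let x_t = x_t(ε₁,…,ε_{t−1}) ∈ ℝ^d be predictable. Define the process X_t = U_square(Σ_{s≤t} ε_s x_s, √(Σ_{s≤t} ‖x_s‖₂²)) where U_square(x,y) = −√(2y² − ‖x‖₂²) for y ≥ ‖x‖₂ and ‖x‖₂ − 2y otherwise. Then E[‖Σ_{t=1}^n ε_t x_t‖₂] ≤ 2·E[√(Σ_{t=1}^n ‖x_t‖₂²)]. -/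
/-- The sign of a Boolean coin: `±1`. -/
def rsign (b : Bool) : ℝ := if b then 1 else -1

/-!
Let `Sₖ = Σ_{t<k} εₜ xₜ`, `Vₖ = Σ_{t<k} ‖xₜ‖²` and `U(q, v) = q / (2√v) - (3/2)√v`.
Then `‖s‖ - 2√v ≤ U(‖s‖², v)`, the gap being `(‖s‖ - √v)² / (2√v)`, and `U(‖Sₖ‖², Vₖ)` is a
supermartingale: given the past, the two values of `εₖ` average `‖Sₖ₊₁‖²` to `‖Sₖ‖² + ‖xₖ‖²`
(parallelogram law), `U` is affine in `q`, and `U(q + b, v + b) ≤ U(q, v)`.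
As `U(0, 0) = 0`, this gives `E‖Sₙ‖ - 2E√Vₙ ≤ E U(‖Sₙ‖², Vₙ) ≤ 0`.
-/

open Finset Function

lemma rsign_not (b : Bool) : rsign (!b) = -rsign b := by
  cases b <;> simp [rsign]

lemma norm_rsign_smul {E : Type*} [SeminormedAddCommGroup E] [NormedSpace ℝ E] (b : Bool) (v : E) :
    ‖rsign b • v‖ = ‖v‖ := by
  cases b <;> simp [rsign]

-- At `v = 0` this is `0` (as `q / 0 = 0`), the right value only for `q = 0`: hence the
-- hypotheses `v = 0 → q = 0` below.
noncomputable def bellman (q v : ℝ) : ℝ := q / (2 * √v) - 3 / 2 * √v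

lemma bellman_add_bellman (p q v : ℝ) : bellman p v + bellman q v = 2 * bellman ((p + q) / 2) v := by
  unfold bellman
  ring

lemma sub_two_mul_sqrt_le_bellman {a v : ℝ} (hv : 0 ≤ v) (h0 : v = 0 → a = 0) :
    a - 2 * √v ≤ bellman (a ^ 2) v := by
  rcases hv.eq_or_lt with rfl | hv
  · simp [bellman, h0 rfl]
  · have hy : 0 < √v := Real.sqrt_pos.2 hv
    have hgap : bellman (a ^ 2) v - (a - 2 * √v) = (a - √v) ^ 2 / (2 * √v) := by
      unfold bellman
      field_simp
      ring
    have : 0 ≤ (a - √v) ^ 2 / (2 * √v) := by positivity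
    linarith

lemma bellman_add_add_le {q b v : ℝ} (hq : 0 ≤ q) (hb : 0 ≤ b) (hv : 0 ≤ v) (h0 : v = 0 → q = 0) :
    bellman (q + b) (v + b) ≤ bellman q v := by
  have hqb : q + b = q + √(v + b) ^ 2 - √v ^ 2 := by
    rw [Real.sq_sqrt hv, Real.sq_sqrt (by linarith)]
    ring
  have hyz : √v ≤ √(v + b) := Real.sqrt_le_sqrt (by linarith)
  have hy : 0 ≤ √v := Real.sqrt_nonneg v
  have hy0 : √v = 0 → q = 0 := fun h => h0 ((Real.sqrt_eq_zero hv).1 h)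
  unfold bellman
  rw [hqb]
  generalize √v = y at *
  generalize √(v + b) = z at *
  rcases hy.eq_or_lt with rfl | hy
  · rw [hy0 rfl]
    rcases hyz.eq_or_lt with rfl | hz
    · simp
    · have hz2 : z ^ 2 / (2 * z) = z / 2 := by
        field_simp
      norm_num [hz2]
      linarith
  · have hz : 0 < z := hy.trans_le hyz
    have hdiff : q / (2 * y) - 3 / 2 * y - ((q + z ^ 2 - y ^ 2) / (2 * z) - 3 / 2 * z) =
        (z - y) * (q + y * (2 * z - y)) / (2 * y * z) := by
      field_simp
      ring
    have : 0 ≤ (z - y) * (q + y * (2 * z - y)) / (2 * y * z) :=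
      div_nonneg (mul_nonneg (by linarith) (by nlinarith)) (by positivity)
    linarith

lemma sum_le_sum_of_add_flip_le {ι : Type*} [Fintype ι] [DecidableEq ι]
    (f g : (ι → Bool) → ℝ) (i : ι) (h : ∀ ε, f ε + f (update ε i (!ε i)) ≤ 2 * g ε) :
    ∑ ε, f ε ≤ ∑ ε, g ε := by
  have hflip : Involutive fun ε : ι → Bool => update ε i (!ε i) := by
    intro ε
    ext j
    rcases eq_or_ne j i with rfl | hj <;> simp [update_of_ne, *]
  have hsum := sum_le_sum fun ε (_ : ε ∈ univ) => h ε
  have hperm : ∑ ε, f (update ε i (!ε i)) = ∑ ε, f ε := Equiv.sum_comp hflip.toPerm f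
  rw [sum_add_distrib, hperm, ← mul_sum] at hsum
  linarith

section PartialSums

variable {E : Type*} [NormedAddCommGroup E] {n : ℕ}

def IsPredictable {α : Type*} (x : Fin n → (Fin n → Bool) → α) : Prop :=
  ∀ (t : Fin n) (ε ε' : Fin n → Bool), (∀ s : Fin n, (s : ℕ) < (t : ℕ) → ε s = ε' s) →
    x t ε = x t ε'

lemma IsPredictable.apply_update {α : Type*} {x : Fin n → (Fin n → Bool) → α}
    (hx : IsPredictable x) {t K : Fin n} (htK : t ≤ K) (ε : Fin n → Bool) (b : Bool) :
    x t (update ε K b) = x t ε :=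
  hx t _ _ fun s hs => update_of_ne (by rintro rfl; exact absurd htK (not_le.2 hs)) _ _

lemma filter_val_lt_succ (K : Fin n) :
    (univ.filter fun t : Fin n => t.val < K.val + 1) =
      insert K (univ.filter fun t : Fin n => t.val < K.val) := by
  ext t
  simp only [mem_filter, mem_univ, true_and, mem_insert, Fin.ext_iff]
  omega

lemma filter_val_lt_self : (univ.filter fun t : Fin n => t.val < n) = univ :=
  filter_true_of_mem fun t _ => t.isLt

noncomputable def partialVar (x : Fin n → (Fin n → Bool) → E) (k : ℕ) (ε : Fin n → Bool) : ℝ :=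
  ∑ t : Fin n with t.val < k, ‖x t ε‖ ^ 2

lemma partialVar_self (x : Fin n → (Fin n → Bool) → E) (ε : Fin n → Bool) :
    partialVar x n ε = ∑ t, ‖x t ε‖ ^ 2 := by
  rw [partialVar, filter_val_lt_self]

lemma partialVar_nonneg (x : Fin n → (Fin n → Bool) → E) (k : ℕ) (ε : Fin n → Bool) :
    0 ≤ partialVar x k ε :=
  sum_nonneg fun _ _ => sq_nonneg _

lemma partialVar_succ_update {x : Fin n → (Fin n → Bool) → E} (hx : IsPredictable x) (K : Fin n)
    (ε : Fin n → Bool) (b : Bool) :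
    partialVar x (K.val + 1) (update ε K b) = partialVar x K ε + ‖x K ε‖ ^ 2 := by
  rw [partialVar, filter_val_lt_succ, sum_insert (by simp), add_comm, hx.apply_update le_rfl]
  congr 1
  refine sum_congr rfl fun t ht => ?_
  rw [hx.apply_update (by simpa using ht : t < K).le]

variable [NormedSpace ℝ E]

noncomputable def partialSum (x : Fin n → (Fin n → Bool) → E) (k : ℕ) (ε : Fin n → Bool) : E :=
  ∑ t : Fin n with t.val < k, rsign (ε t) • x t ε

lemma partialSum_self (x : Fin n → (Fin n → Bool) → E) (ε : Fin n → Bool) :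
    partialSum x n ε = ∑ t, rsign (ε t) • x t ε := by
  rw [partialSum, filter_val_lt_self]

lemma partialSum_eq_zero_of_partialVar_eq_zero {x : Fin n → (Fin n → Bool) → E} {k : ℕ}
    {ε : Fin n → Bool} (h : partialVar x k ε = 0) : partialSum x k ε = 0 := by
  rw [partialVar, sum_eq_zero_iff_of_nonneg fun _ _ => sq_nonneg _] at h
  exact sum_eq_zero fun t ht => by simp [norm_eq_zero.1 (pow_eq_zero_iff two_ne_zero |>.1 (h t ht))]

lemma partialSum_succ_update {x : Fin n → (Fin n → Bool) → E} (hx : IsPredictable x) (K : Fin n)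
    (ε : Fin n → Bool) (b : Bool) :
    partialSum x (K.val + 1) (update ε K b) = partialSum x K ε + rsign b • x K ε := by
  rw [partialSum, filter_val_lt_succ, sum_insert (by simp), add_comm, update_self,
    hx.apply_update le_rfl]
  congr 1
  refine sum_congr rfl fun t ht => ?_
  have htK : t < K := by simpa using ht
  rw [update_of_ne htK.ne, hx.apply_update htK.le]

end PartialSums

section BellmanProcess

variable {E : Type*} [NormedAddCommGroup E] [InnerProductSpace ℝ E] {n : ℕ}

-- At `v = 0` this is `0` (as `q / 0 = 0`), the right value only for `q = 0`: hence the
-- hypotheses `v = 0 → q = 0` below.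
noncomputable def bellmanProcess (x : Fin n → (Fin n → Bool) → E) (k : ℕ) (ε : Fin n → Bool) : ℝ :=
  bellman (‖partialSum x k ε‖ ^ 2) (partialVar x k ε)

lemma norm_partialSum_le (x : Fin n → (Fin n → Bool) → E) (k : ℕ) (ε : Fin n → Bool) :
    ‖partialSum x k ε‖ ≤ bellmanProcess x k ε + 2 * √(partialVar x k ε) := by
  have := sub_two_mul_sqrt_le_bellman (partialVar_nonneg x k ε)
    fun h => norm_eq_zero.2 (partialSum_eq_zero_of_partialVar_eq_zero h)
  rw [bellmanProcess]
  linarith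

lemma bellmanProcess_succ_add_flip_le {x : Fin n → (Fin n → Bool) → E} (hx : IsPredictable x)
    (K : Fin n) (ε : Fin n → Bool) :
    bellmanProcess x (K.val + 1) ε + bellmanProcess x (K.val + 1) (update ε K (!ε K)) ≤
      2 * bellmanProcess x K ε := by
  set S := partialSum x K ε
  set w := rsign (ε K) • x K ε
  have hpar : (‖S + w‖ ^ 2 + ‖S - w‖ ^ 2) / 2 = ‖S‖ ^ 2 + ‖x K ε‖ ^ 2 := by
    have := parallelogram_law_with_norm ℝ S w
    rw [norm_rsign_smul] at this
    linarith
  have hS₁ : partialSum x (K.val + 1) ε = S + w := by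
    simpa using partialSum_succ_update hx K ε (ε K)
  have hS₂ : partialSum x (K.val + 1) (update ε K (!ε K)) = S - w := by
    rw [partialSum_succ_update hx, rsign_not, neg_smul, ← sub_eq_add_neg]
  have hV₁ : partialVar x (K.val + 1) ε = partialVar x K ε + ‖x K ε‖ ^ 2 := by
    simpa using partialVar_succ_update hx K ε (ε K)
  rw [bellmanProcess, bellmanProcess, hS₁, hS₂, hV₁, partialVar_succ_update hx, bellman_add_bellman,
    hpar, bellmanProcess]
  gcongr
  exact bellman_add_add_le (sq_nonneg _) (sq_nonneg _) (partialVar_nonneg x K ε)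
    fun h => by simp [S, partialSum_eq_zero_of_partialVar_eq_zero h]

lemma sum_bellmanProcess_le_zero {x : Fin n → (Fin n → Bool) → E} (hx : IsPredictable x) :
    ∀ k ≤ n, ∑ ε, bellmanProcess x k ε ≤ 0 := by
  intro k
  induction k with
  | zero => simp [bellmanProcess, partialSum, partialVar, bellman]
  | succ k ih =>
    intro (hk : k < n)
    have hstep := bellmanProcess_succ_add_flip_le hx ⟨k, hk⟩
    exact (sum_le_sum_of_add_flip_le _ _ _ hstep).trans (ih hk.le)

end BellmanProcess

/-- Osękowski's sharp square-function inequality for predictable Rademacher-martingales in `ℝᵈ`: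
`E‖Σₜ εₜ xₜ‖₂ ≤ 2 E√(Σₜ ‖xₜ‖₂²)`.  Expectations over the `n` independent Rademacher signs are
written as normalized sums over all sign patterns `ε : Fin n → Bool`. -/
theorem square_function_inequality (n d : ℕ)
    (x : Fin n → (Fin n → Bool) → EuclideanSpace ℝ (Fin d))
    (hpred : ∀ (t : Fin n) (ε ε' : Fin n → Bool),
      (∀ s : Fin n, (s : ℕ) < (t : ℕ) → ε s = ε' s) → x t ε = x t ε') :
    (∑ ε : Fin n → Bool, ‖∑ t, rsign (ε t) • x t ε‖) / 2 ^ n ≤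
      2 * ((∑ ε : Fin n → Bool, Real.sqrt (∑ t, ‖x t ε‖ ^ 2)) / 2 ^ n) := by
  have hsum : ∑ ε, ‖∑ t, rsign (ε t) • x t ε‖ ≤ 2 * ∑ ε, √(∑ t, ‖x t ε‖ ^ 2) := by
    calc ∑ ε, ‖∑ t, rsign (ε t) • x t ε‖
        ≤ ∑ ε, (bellmanProcess x n ε + 2 * √(partialVar x n ε)) := by
          refine sum_le_sum fun ε _ => ?_
          rw [← partialSum_self]
          exact norm_partialSum_le x n ε
      _ = ∑ ε, bellmanProcess x n ε + 2 * ∑ ε, √(∑ t, ‖x t ε‖ ^ 2) := by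
          simp only [sum_add_distrib, mul_sum, partialVar_self]
      _ ≤ 2 * ∑ ε, √(∑ t, ‖x t ε‖ ^ 2) := by
          linarith [sum_bellmanProcess_le_zero hpred n le_rfl]
  rw [← mul_div_assoc]
  gcongr
end
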